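/- Let G be a composite graph formed from disjoint connected subgraphs G_1,...,G_n joined through bridge nodes l_1,...,l_n via a connected backbone graph B. Then the effective resistance of G satisfies Ω_G = Σ_{i=1}^n Ω_i + Σ_{i=1}^n Σ_{j=i+1}^n n_i n_j r(l_i, l_j) + Σ_{i=1}^n (N − n_i) C_i(l_i), where Ω_i is the effective resistance of G_i and r(l_i, l_j) is the resistance distance between bridge nodes in G. -/

import Mathlib

open scoped Classical
open Matrix

noncomputable section

/-- The four Moore–Penrose conditions for `B` to be the pseudoinverse of `A`. -/
def IsMoorePenroseInv {α : Type*} [Fintype α] (A B : Matrix α α ℝ) : Prop :=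
  A * B * A = A ∧ B * A * B = B ∧ (A * B)ᵀ = A * B ∧ (B * A)ᵀ = B * A

/-- The Moore–Penrose pseudoinverse of a real square matrix (it exists and is
unique; we extract it by choice). -/
noncomputable def pinv {α : Type*} [Fintype α] (A : Matrix α α ℝ) : Matrix α α ℝ :=
  if h : ∃ B, IsMoorePenroseInv A B then h.choose else 0

/-- The (real) Laplacian matrix of a simple graph. -/
noncomputable def lap {α : Type*} [Fintype α] (H : SimpleGraph α) : Matrix α α ℝ :=
  letI := Classical.decEq α
  letI : DecidableRel H.Adj := Classical.decRel _
  H.lapMatrix ℝ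

/-- The standard basis (indicator) vector `e_u`. -/
noncomputable def evec {α : Type*} [Fintype α] (u : α) : α → ℝ :=
  fun w => if w = u then 1 else 0

/-- Resistance distance `r(u,v) = (e_u - e_v)ᵀ L† (e_u - e_v)`. -/
noncomputable def resistance {α : Type*} [Fintype α] (H : SimpleGraph α) (u v : α) : ℝ :=
  (evec u - evec v) ⬝ᵥ (pinv (lap H)).mulVec (evec u - evec v)

/-- Effective resistance `Ω_H = Σ_{u<v} r(u,v) = (1/2) Σ_{u,v} r(u,v)`. -/
noncomputable def effRes {α : Type*} [Fintype α] (H : SimpleGraph α) : ℝ :=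
  (1 / 2) * ∑ u : α, ∑ v : α, resistance H u v

/-- Network coherence `H_C(H) = Ω_H / (2 |V_H|)`. -/
noncomputable def coherence {α : Type*} [Fintype α] (H : SimpleGraph α) : ℝ :=
  effRes H / (2 * Fintype.card α)

/-- Resistance centrality `C(v) = Σ_{u ≠ v} r(u,v)`. -/
noncomputable def rcentrality {α : Type*} [Fintype α] (H : SimpleGraph α) (v : α) : ℝ :=
  ∑ u ∈ Finset.univ.filter (· ≠ v), resistance H u v

/-- The composite graph built from disjoint subgraphs `G i` with bridge nodes `l i`,
connected according to the backbone graph `B` on the indices. -/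
def composite {n : ℕ} (V : Fin n → Type*) (G : ∀ i, SimpleGraph (V i))
    (l : ∀ i, V i) (B : SimpleGraph (Fin n)) : SimpleGraph (Σ i, V i) where
  Adj x y := (∃ h : x.1 = y.1, (G y.1).Adj (h ▸ x.2) y.2) ∨
    (B.Adj x.1 y.1 ∧ x.2 = l x.1 ∧ y.2 = l y.1)
  symm := ⟨by
    rintro ⟨i, u⟩ ⟨j, v⟩ (⟨h, hadj⟩ | ⟨hB, hu, hv⟩)
    · dsimp only at h
      subst h
      exact Or.inl ⟨rfl, hadj.symm⟩
    · exact Or.inr ⟨hB.symm, hv, hu⟩⟩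
  loopless := ⟨by
    rintro ⟨i, u⟩ (⟨h, hadj⟩ | ⟨hB, _, _⟩)
    · exact (G i).irrefl hadj
    · exact B.irrefl hB⟩

/-!
Resistances are potential differences: if `L y = e_u - e_v` then `r(u, v) = y u - y v`, since
`(L y)ᵀ L† (L y) = yᵀ L L† L y = yᵀ L y`. The pseudoinverse exists because, with `J` the
averaging projection, `L + J` is invertible for a connected graph and `(L + J)⁻¹ - J` satisfies
the Moore–Penrose conditions; it also shows that `L y = x` is solvable whenever `∑ x = 0`.

In the composite graph, a potential of a block extended by its value at the bridge node, and a
backbone potential extended constantly over each block, are again potentials. Hence resistances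
inside a block are those of the block, and across blocks `r(u, v) = r_i(u, l_i) + r(l_i, l_j) +
r_j(l_j, v)`. Summing over all pairs of blocks gives the formula.
-/

section MoorePenrose

variable {α : Type*} [Fintype α]

theorem isMoorePenroseInv_pinv {A : Matrix α α ℝ} (h : ∃ P, IsMoorePenroseInv A P) :
    IsMoorePenroseInv A (pinv A) := by
  rw [pinv, dif_pos h]
  exact h.choose_spec

variable {A J : Matrix α α ℝ}

theorem mul_nonsing_inv_add_eq (hJA : J * A = 0) (hJJ : J * J = J) (hdet : IsUnit (A + J).det) :
    J * (A + J)⁻¹ = J := by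
  have hJM : J * (A + J) = J := by rw [Matrix.mul_add, hJA, hJJ, zero_add]
  calc J * (A + J)⁻¹ = J * (A + J) * (A + J)⁻¹ := by rw [hJM]
    _ = J := by rw [Matrix.mul_assoc, Matrix.mul_nonsing_inv _ hdet, Matrix.mul_one]

theorem nonsing_inv_add_mul_eq (hAJ : A * J = 0) (hJJ : J * J = J) (hdet : IsUnit (A + J).det) :
    (A + J)⁻¹ * J = J := by
  have hMJ : (A + J) * J = J := by rw [Matrix.add_mul, hAJ, hJJ, zero_add]
  calc (A + J)⁻¹ * J = (A + J)⁻¹ * ((A + J) * J) := by rw [hMJ]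
    _ = J := by rw [← Matrix.mul_assoc, Matrix.nonsing_inv_mul _ hdet, Matrix.one_mul]

theorem mul_nonsing_inv_add_sub (hAJ : A * J = 0) (hJA : J * A = 0) (hJJ : J * J = J)
    (hdet : IsUnit (A + J).det) : A * ((A + J)⁻¹ - J) = 1 - J := by
  rw [Matrix.mul_sub, hAJ, sub_zero, ← add_sub_cancel_right A J, Matrix.sub_mul,
    add_sub_cancel_right, Matrix.mul_nonsing_inv _ hdet, mul_nonsing_inv_add_eq hJA hJJ hdet]

theorem nonsing_inv_add_sub_mul (hAJ : A * J = 0) (hJA : J * A = 0) (hJJ : J * J = J)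
    (hdet : IsUnit (A + J).det) : ((A + J)⁻¹ - J) * A = 1 - J := by
  rw [Matrix.sub_mul, hJA, sub_zero, ← add_sub_cancel_right A J, Matrix.mul_sub,
    add_sub_cancel_right, Matrix.nonsing_inv_mul _ hdet, nonsing_inv_add_mul_eq hAJ hJJ hdet]

theorem isMoorePenroseInv_nonsing_inv_add_sub (hAJ : A * J = 0) (hJA : J * A = 0)
    (hJJ : J * J = J) (hJ : Jᵀ = J) (hdet : IsUnit (A + J).det) :
    IsMoorePenroseInv A ((A + J)⁻¹ - J) := by
  have hAP := mul_nonsing_inv_add_sub hAJ hJA hJJ hdet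
  have hPA := nonsing_inv_add_sub_mul hAJ hJA hJJ hdet
  refine ⟨?_, ?_, ?_, ?_⟩
  · rw [hAP, Matrix.sub_mul, Matrix.one_mul, hJA, sub_zero]
  · rw [hPA, Matrix.sub_mul, Matrix.one_mul, Matrix.mul_sub, mul_nonsing_inv_add_eq hJA hJJ hdet,
      hJJ, sub_self, sub_zero]
  · rw [hAP, Matrix.transpose_sub, Matrix.transpose_one, hJ]
  · rw [hPA, Matrix.transpose_sub, Matrix.transpose_one, hJ]

end MoorePenrose

section Laplacian

variable {α : Type*} [Fintype α] (H : SimpleGraph α)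

theorem lap_eq_lapMatrix [DecidableEq α] [DecidableRel H.Adj] : lap H = H.lapMatrix ℝ := by
  unfold lap
  congr!

theorem lap_transpose : (lap H)ᵀ = lap H := by
  rw [lap_eq_lapMatrix]
  exact H.isSymm_lapMatrix ℝ

theorem lap_mulVec_apply (f : α → ℝ) (x : α) :
    (lap H *ᵥ f) x = ∑ y, if H.Adj x y then f x - f y else 0 := by
  rw [lap_eq_lapMatrix, SimpleGraph.lapMatrix_mulVec_apply, Finset.sum_ite, Finset.sum_const_zero,
    add_zero, Finset.sum_sub_distrib, Finset.sum_const, nsmul_eq_mul,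
    ← SimpleGraph.neighborFinset_eq_filter, SimpleGraph.card_neighborFinset_eq_degree]

theorem lap_mulVec_const (c : ℝ) : lap H *ᵥ (fun _ => c) = 0 := by
  ext x
  simp [lap_mulVec_apply]

def averaging (α : Type*) [Fintype α] : Matrix α α ℝ :=
  Matrix.of fun _ _ => (Fintype.card α : ℝ)⁻¹

theorem averaging_mulVec (x : α → ℝ) :
    averaging α *ᵥ x = fun _ => (Fintype.card α : ℝ)⁻¹ * ∑ a, x a := by
  ext
  simp [averaging, Matrix.mulVec, dotProduct, Finset.mul_sum]

theorem averaging_transpose : (averaging α)ᵀ = averaging α := rfl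

theorem averaging_mul_self [Nonempty α] : averaging α * averaging α = averaging α := by
  ext
  simp [averaging, Matrix.mul_apply]

theorem lap_mul_averaging : lap H * averaging α = 0 := by
  ext a b
  have := congrFun (lap_mulVec_const H (Fintype.card α : ℝ)⁻¹) a
  simpa [Matrix.mulVec, dotProduct, Matrix.mul_apply, averaging] using this

theorem averaging_mul_lap : averaging α * lap H = 0 := by
  rw [← Matrix.transpose_inj, Matrix.transpose_mul, lap_transpose, averaging_transpose,
    lap_mul_averaging, Matrix.transpose_zero]

variable {H}

theorem isUnit_det_lap_add_averaging (hH : H.Connected) : IsUnit (lap H + averaging α).det := by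
  have := hH.nonempty
  rw [isUnit_iff_ne_zero]
  intro hdet
  obtain ⟨v, hv0, hv⟩ := Matrix.exists_mulVec_eq_zero_iff.mpr hdet
  have hJv : averaging α *ᵥ v = 0 := by
    have := congrArg (averaging α *ᵥ ·) hv
    simpa [Matrix.mulVec_mulVec, Matrix.mul_add, averaging_mul_lap, averaging_mul_self] using this
  have hLv : lap H *ᵥ v = 0 := by
    simpa [Matrix.add_mulVec, hJv] using hv
  rw [lap_eq_lapMatrix, SimpleGraph.lapMatrix_mulVec_eq_zero_iff_forall_reachable] at hLv
  obtain ⟨b⟩ := ‹Nonempty α›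
  have hconst : v = fun _ => v b := funext fun a => hLv a b (hH.preconnected a b)
  rw [hconst, averaging_mulVec] at hJv
  apply hv0
  rw [hconst]
  ext
  simpa using congrFun hJv b

theorem isMoorePenroseInv_lap (hH : H.Connected) : IsMoorePenroseInv (lap H) (pinv (lap H)) :=
  have := hH.nonempty
  isMoorePenroseInv_pinv ⟨_, isMoorePenroseInv_nonsing_inv_add_sub (lap_mul_averaging H)
    (averaging_mul_lap H) averaging_mul_self averaging_transpose (isUnit_det_lap_add_averaging hH)⟩

theorem exists_lap_mulVec_eq (hH : H.Connected) {x : α → ℝ} (hx : ∑ a, x a = 0) :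
    ∃ y, lap H *ᵥ y = x := by
  have := hH.nonempty
  refine ⟨((lap H + averaging α)⁻¹ - averaging α) *ᵥ x, ?_⟩
  rw [Matrix.mulVec_mulVec, mul_nonsing_inv_add_sub (lap_mul_averaging H) (averaging_mul_lap H)
    averaging_mul_self (isUnit_det_lap_add_averaging hH), Matrix.sub_mulVec, averaging_mulVec,
    hx, Matrix.one_mulVec]
  simp [Pi.zero_def]

end Laplacian

section Resistance

variable {α : Type*} [Fintype α]

theorem dotProduct_evec_sub (y : α → ℝ) (u v : α) : y ⬝ᵥ (evec u - evec v) = y u - y v := by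
  simp [dotProduct, evec, mul_sub, Finset.sum_sub_distrib]

theorem sum_evec_sub (u v : α) : ∑ w, (evec u - evec v) w = 0 := by
  simp [evec, Finset.sum_sub_distrib]

variable {H : SimpleGraph α}

theorem resistance_eq_sub_of_lap_mulVec (hH : H.Connected) {u v : α} {y : α → ℝ}
    (hy : lap H *ᵥ y = evec u - evec v) : resistance H u v = y u - y v := by
  calc resistance H u v = y ⬝ᵥ ((lap H)ᵀ *ᵥ (pinv (lap H) *ᵥ (lap H *ᵥ y))) := by
        rw [resistance, ← hy, Matrix.dotProduct_mulVec y, Matrix.vecMul_transpose]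
    _ = y ⬝ᵥ (lap H *ᵥ y) := by
        rw [lap_transpose, Matrix.mulVec_mulVec, Matrix.mulVec_mulVec, (isMoorePenroseInv_lap hH).1]
    _ = y u - y v := by rw [hy, dotProduct_evec_sub]

theorem exists_lap_mulVec_eq_evec_sub (hH : H.Connected) (u v : α) :
    ∃ y, lap H *ᵥ y = evec u - evec v :=
  exists_lap_mulVec_eq hH (sum_evec_sub u v)

variable (H)

theorem resistance_self (v : α) : resistance H v v = 0 := by
  simp [resistance]

theorem resistance_comm (u v : α) : resistance H u v = resistance H v u := by
  rw [resistance, resistance, ← neg_sub (evec v), Matrix.mulVec_neg, dotProduct_neg,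
    neg_dotProduct, neg_neg]

theorem rcentrality_eq_sum (v : α) : rcentrality H v = ∑ u, resistance H u v :=
  Finset.sum_filter_of_ne fun u _ hu huv => hu (by rw [huv, resistance_self])

end Resistance

section Composite

variable {n : ℕ} {V : Fin n → Type*} {G : ∀ i, SimpleGraph (V i)} {l : ∀ i, V i}
  {B : SimpleGraph (Fin n)}

theorem composite_adj_mk_mk_self {k : Fin n} {w z : V k} :
    (composite V G l B).Adj ⟨k, w⟩ ⟨k, z⟩ ↔ (G k).Adj w z := by
  refine ⟨?_, fun h => Or.inl ⟨rfl, h⟩⟩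
  rintro (⟨_, h⟩ | ⟨h, -⟩)
  · exact h
  · exact absurd h (B.loopless.irrefl k)

theorem composite_adj_mk_mk_of_ne {k m : Fin n} (hkm : k ≠ m) {w : V k} {z : V m} :
    (composite V G l B).Adj ⟨k, w⟩ ⟨m, z⟩ ↔ B.Adj k m ∧ w = l k ∧ z = l m := by
  refine ⟨?_, Or.inr⟩
  rintro (⟨h, -⟩ | h)
  · exact absurd h hkm
  · exact h

theorem composite_connected (hG : ∀ i, (G i).Connected) (hB : B.Connected) :
    (composite V G l B).Connected := by
  let embedBlock (i : Fin n) : G i →g composite V G l B :=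
    ⟨fun w => ⟨i, w⟩, fun h => Or.inl ⟨rfl, h⟩⟩
  let embedBackbone : B →g composite V G l B :=
    ⟨fun k => ⟨k, l k⟩, fun h => Or.inr ⟨h, rfl, rfl⟩⟩
  obtain ⟨i⟩ := hB.nonempty
  obtain ⟨u⟩ := (hG i).nonempty
  refine (SimpleGraph.connected_iff _).mpr ⟨?_, ⟨⟨i, u⟩⟩⟩
  rintro ⟨i, u⟩ ⟨j, v⟩
  have hi : (composite V G l B).Reachable ⟨i, u⟩ ⟨i, l i⟩ :=
    ((hG i).preconnected u (l i)).map (embedBlock i)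
  have hij : (composite V G l B).Reachable ⟨i, l i⟩ ⟨j, l j⟩ :=
    (hB.preconnected i j).map embedBackbone
  have hj : (composite V G l B).Reachable ⟨j, l j⟩ ⟨j, v⟩ :=
    ((hG j).preconnected (l j) v).map (embedBlock j)
  exact (hi.trans hij).trans hj

def blockPotential (l : ∀ i, V i) (i : Fin n) (y : V i → ℝ) : (Σ k, V k) → ℝ :=
  fun x => if h : x.1 = i then y (h ▸ x.2) else y (l i)

@[simp]
theorem blockPotential_mk_self (i : Fin n) (y : V i → ℝ) (w : V i) :
    blockPotential l i y ⟨i, w⟩ = y w := by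
  simp [blockPotential]

theorem blockPotential_mk_of_ne {i k : Fin n} (h : k ≠ i) (y : V i → ℝ) (w : V k) :
    blockPotential l i y ⟨k, w⟩ = y (l i) := by
  simp [blockPotential, h]

theorem blockPotential_bridge (i : Fin n) (y : V i → ℝ) (m : Fin n) :
    blockPotential l i y ⟨m, l m⟩ = y (l i) := by
  by_cases h : m = i
  · subst h
    simp [blockPotential]
  · exact blockPotential_mk_of_ne h y (l m)

variable [∀ i, Fintype (V i)]

theorem evec_mk_mk_self (i : Fin n) (u w : V i) :
    evec (⟨i, u⟩ : Σ k, V k) ⟨i, w⟩ = evec u w := by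
  simp [evec]

theorem evec_mk_mk_of_ne {i k : Fin n} (h : k ≠ i) (u : V i) (w : V k) :
    evec (⟨i, u⟩ : Σ k, V k) ⟨k, w⟩ = 0 := by
  simp [evec, h]

theorem evec_mk_bridge (i k : Fin n) (w : V k) :
    evec (⟨i, l i⟩ : Σ k, V k) ⟨k, w⟩ = if w = l k then evec i k else 0 := by
  by_cases h : k = i
  · subst h
    simp [evec]
  · simp [evec, h]

theorem lap_composite_mulVec_apply (F : (Σ k, V k) → ℝ) (k : Fin n) (w : V k) :
    (lap (composite V G l B) *ᵥ F) ⟨k, w⟩ =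
      (lap (G k) *ᵥ fun z => F ⟨k, z⟩) w +
        if w = l k then (lap B *ᵥ fun m => F ⟨m, l m⟩) k else 0 := by
  simp only [lap_mulVec_apply, Fintype.sum_sigma]
  rw [Fintype.sum_eq_add_sum_compl k]
  simp only [composite_adj_mk_mk_self]
  congr 1
  have hbridge : ∀ m ∈ ({k}ᶜ : Finset (Fin n)),
      (∑ z : V m, if (composite V G l B).Adj ⟨k, w⟩ ⟨m, z⟩ then F ⟨k, w⟩ - F ⟨m, z⟩ else 0) =
        if w = l k ∧ B.Adj k m then F ⟨k, w⟩ - F ⟨m, l m⟩ else 0 := fun m hm => by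
    have hkm : k ≠ m := fun h => by simp [h] at hm
    simp only [composite_adj_mk_mk_of_ne hkm]
    by_cases hw : w = l k <;> by_cases hadj : B.Adj k m <;> simp [hw, hadj]
  rw [Finset.sum_congr rfl hbridge, Fintype.sum_eq_add_sum_compl k (fun m => ite (B.Adj k m) _ _)]
  by_cases hw : w = l k
  · subst hw
    simp
  · simp [hw]

theorem lap_composite_mulVec_blockPotential {i : Fin n} {u v : V i} {y : V i → ℝ}
    (hy : lap (G i) *ᵥ y = evec u - evec v) :
    lap (composite V G l B) *ᵥ blockPotential l i y = evec (⟨i, u⟩ : Σ k, V k) - evec ⟨i, v⟩ := by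
  ext ⟨k, w⟩
  rw [lap_composite_mulVec_apply]
  simp only [blockPotential_bridge, lap_mulVec_const, Pi.zero_apply, ite_self, add_zero]
  by_cases hk : k = i
  · subst hk
    simp only [blockPotential_mk_self, hy, Pi.sub_apply, evec_mk_mk_self]
  · simp only [blockPotential_mk_of_ne hk, lap_mulVec_const, Pi.sub_apply,
      evec_mk_mk_of_ne hk, Pi.zero_apply, sub_zero]

theorem lap_composite_mulVec_comp_fst {i j : Fin n} {z : Fin n → ℝ}
    (hz : lap B *ᵥ z = evec i - evec j) :
    lap (composite V G l B) *ᵥ (fun x => z x.1) = evec (⟨i, l i⟩ : Σ k, V k) - evec ⟨j, l j⟩ := by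
  ext ⟨k, w⟩
  rw [lap_composite_mulVec_apply]
  simp only [lap_mulVec_const, Pi.zero_apply, zero_add, hz, Pi.sub_apply, evec_mk_bridge]
  split_ifs <;> simp

theorem resistance_composite_mk_mk_self (hG : ∀ i, (G i).Connected) (hB : B.Connected)
    (i : Fin n) (u v : V i) :
    resistance (composite V G l B) ⟨i, u⟩ ⟨i, v⟩ = resistance (G i) u v := by
  obtain ⟨y, hy⟩ := exists_lap_mulVec_eq_evec_sub (hG i) u v
  rw [resistance_eq_sub_of_lap_mulVec (hG i) hy, resistance_eq_sub_of_lap_mulVec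
    (composite_connected hG hB) (lap_composite_mulVec_blockPotential hy), blockPotential_mk_self,
    blockPotential_mk_self]

theorem resistance_composite_bridge (hG : ∀ i, (G i).Connected) (hB : B.Connected)
    (i j : Fin n) :
    resistance (composite V G l B) ⟨i, l i⟩ ⟨j, l j⟩ = resistance B i j := by
  obtain ⟨z, hz⟩ := exists_lap_mulVec_eq_evec_sub hB i j
  rw [resistance_eq_sub_of_lap_mulVec hB hz, resistance_eq_sub_of_lap_mulVec
    (composite_connected hG hB) (lap_composite_mulVec_comp_fst hz)]

/-- The potentials of the three legs `u → l i → l j → v` add up to a potential for `u → v`. -/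
theorem resistance_composite_mk_mk_of_ne (hG : ∀ i, (G i).Connected) (hB : B.Connected)
    {i j : Fin n} (hij : i ≠ j) (u : V i) (v : V j) :
    resistance (composite V G l B) ⟨i, u⟩ ⟨j, v⟩ =
      resistance (G i) u (l i) + resistance (composite V G l B) ⟨i, l i⟩ ⟨j, l j⟩ +
        resistance (G j) (l j) v := by
  obtain ⟨y, hy⟩ := exists_lap_mulVec_eq_evec_sub (hG i) u (l i)
  obtain ⟨z, hz⟩ := exists_lap_mulVec_eq_evec_sub hB i j
  obtain ⟨y', hy'⟩ := exists_lap_mulVec_eq_evec_sub (hG j) (l j) v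
  have hF : lap (composite V G l B) *ᵥ
      (blockPotential l i y + (fun x => z x.1) + blockPotential l j y') =
        evec (⟨i, u⟩ : Σ k, V k) - evec ⟨j, v⟩ := by
    rw [Matrix.mulVec_add, Matrix.mulVec_add, lap_composite_mulVec_blockPotential hy,
      lap_composite_mulVec_comp_fst hz, lap_composite_mulVec_blockPotential hy']
    abel
  rw [resistance_eq_sub_of_lap_mulVec (composite_connected hG hB) hF,
    resistance_composite_bridge hG hB, resistance_eq_sub_of_lap_mulVec (hG i) hy,
    resistance_eq_sub_of_lap_mulVec hB hz, resistance_eq_sub_of_lap_mulVec (hG j) hy']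
  simp only [Pi.add_apply, blockPotential_mk_self, blockPotential_mk_of_ne hij,
    blockPotential_mk_of_ne hij.symm]
  ring

theorem sum_resistance_composite_mk_mk_self (hG : ∀ i, (G i).Connected) (hB : B.Connected)
    (i : Fin n) :
    ∑ u : V i, ∑ v : V i, resistance (composite V G l B) ⟨i, u⟩ ⟨i, v⟩ = 2 * effRes (G i) := by
  simp only [resistance_composite_mk_mk_self hG hB, effRes]
  ring

theorem sum_resistance_composite_mk_mk_of_ne (hG : ∀ i, (G i).Connected) (hB : B.Connected)
    {i j : Fin n} (hij : i ≠ j) :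
    ∑ u : V i, ∑ v : V j, resistance (composite V G l B) ⟨i, u⟩ ⟨j, v⟩ =
      Fintype.card (V j) * rcentrality (G i) (l i) +
        Fintype.card (V i) * Fintype.card (V j) *
          resistance (composite V G l B) ⟨i, l i⟩ ⟨j, l j⟩ +
        Fintype.card (V i) * rcentrality (G j) (l j) := by
  rw [Finset.sum_congr rfl fun u _ => Finset.sum_congr rfl fun v _ =>
    resistance_composite_mk_mk_of_ne hG hB hij u v]
  simp only [Finset.sum_add_distrib, Finset.sum_const, Finset.card_univ, nsmul_eq_mul,
    rcentrality_eq_sum, ← Finset.mul_sum, resistance_comm (G j) (l j)]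
  ring

end Composite

theorem Finset.sum_sum_eq_sum_diag_add_two_nsmul_sum_sum_Ioi {ι M : Type*} [LinearOrder ι]
    [Fintype ι] [LocallyFiniteOrderTop ι] [LocallyFiniteOrderBot ι] [AddCommMonoid M]
    (f : ι → ι → M) (hf : ∀ i j, f i j = f j i) :
    ∑ i, ∑ j, f i j = ∑ i, f i i + 2 • ∑ i, ∑ j ∈ Ioi i, f i j := by
  have hrow : ∀ i, ∑ j, f i j = f i i + (∑ j ∈ Ioi i, f i j + ∑ j ∈ Iio i, f i j) := fun i => by
    rw [Fintype.sum_eq_add_sum_compl i, ← Ioi_disjUnion_Iio, sum_disjUnion]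
  have hlower : ∑ i, ∑ j ∈ Iio i, f i j = ∑ i, ∑ j ∈ Ioi i, f i j := by
    rw [sum_comm' (t' := univ) (s' := fun j => Ioi j) (by simp)]
    simp only [hf]
  simp only [hrow, sum_add_distrib, hlower, two_nsmul]

theorem effRes_sigma {ι : Type*} [Fintype ι] {V : ι → Type*} [∀ i, Fintype (V i)]
    (H : SimpleGraph (Σ i, V i)) :
    effRes H = 1 / 2 * ∑ i, ∑ j, ∑ u : V i, ∑ v : V j, resistance H ⟨i, u⟩ ⟨j, v⟩ := by
  simp only [effRes, Fintype.sum_sigma]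
  congr 1
  exact Finset.sum_congr rfl fun i _ => Finset.sum_comm

theorem effRes_composite_general
    {n : ℕ}
    (V : Fin n → Type*) [∀ i, Fintype (V i)]
    (G : ∀ i, SimpleGraph (V i)) (l : ∀ i, V i) (B : SimpleGraph (Fin n))
    (hG : ∀ i, (G i).Connected) (hB : B.Connected) :
    effRes (composite V G l B) =
      (∑ i, effRes (G i)) +
      (∑ i, ∑ j ∈ Finset.Ioi i,
         (Fintype.card (V i) : ℝ) * (Fintype.card (V j) : ℝ) *
           resistance (composite V G l B) ⟨i, l i⟩ ⟨j, l j⟩) +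
      (∑ i, ((Fintype.card (Σ i, V i) : ℝ) - (Fintype.card (V i) : ℝ)) *
         rcentrality (G i) (l i)) := by
  set N : Fin n → ℝ := fun i => Fintype.card (V i)
  set C : Fin n → ℝ := fun i => rcentrality (G i) (l i)
  set ρ : Fin n → Fin n → ℝ := fun i j => N i * N j * resistance (composite V G l B) ⟨i, l i⟩ ⟨j, l j⟩
  -- the cross-block formula, corrected on the diagonal blocks, where `r(l i, l i) = 0`
  have hblock (i j : Fin n) :
      ∑ u : V i, ∑ v : V j, resistance (composite V G l B) ⟨i, u⟩ ⟨j, v⟩ =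
        N j * C i + ρ i j + N i * C j + if i = j then 2 * (effRes (G i) - N i * C i) else 0 := by
    rcases eq_or_ne i j with rfl | hij
    · simp [ρ, sum_resistance_composite_mk_mk_self hG hB, resistance_self]
      ring
    · simp [ρ, N, C, sum_resistance_composite_mk_mk_of_ne hG hB hij, hij]
  have hρ : ∑ i, ∑ j, ρ i j = 2 * ∑ i, ∑ j ∈ Finset.Ioi i, ρ i j := by
    rw [Finset.sum_sum_eq_sum_diag_add_two_nsmul_sum_sum_Ioi ρ fun i j => by
      simp only [ρ, resistance_comm (composite V G l B) ⟨i, l i⟩]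
      ring, two_nsmul, two_mul]
    simp [ρ, resistance_self]
  have hN : (Fintype.card (Σ i, V i) : ℝ) = ∑ i, N i := by simp [N, Fintype.card_sigma]
  rw [effRes_sigma]
  simp only [hblock, Finset.sum_add_distrib, Finset.sum_ite_eq, Finset.mem_univ, if_true, hρ, hN,
    ← Finset.sum_mul, ← Finset.mul_sum, sub_mul, Finset.sum_sub_distrib]
  ring

/-- Effective resistance of a composite graph in terms of the
effective resistances of the subgraphs, resistance distances between bridge
nodes (in the composite graph), and resistance centralities of the bridge
nodes (within their own subgraphs). -/
theorem effRes_composite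
    {n : ℕ} (hn : 2 ≤ n)
    (V : Fin n → Type*) [∀ i, Fintype (V i)]
    (G : ∀ i, SimpleGraph (V i)) (l : ∀ i, V i) (B : SimpleGraph (Fin n))
    (hG : ∀ i, (G i).Connected) (hB : B.Connected) :
    effRes (composite V G l B) =
      (∑ i, effRes (G i)) +
      (∑ i, ∑ j ∈ Finset.Ioi i,
         (Fintype.card (V i) : ℝ) * (Fintype.card (V j) : ℝ) *
           resistance (composite V G l B) ⟨i, l i⟩ ⟨j, l j⟩) +
      (∑ i, ((Fintype.card (Σ i, V i) : ℝ) - (Fintype.card (V i) : ℝ)) *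
         rcentrality (G i) (l i)) :=
  effRes_composite_general V G l B hG hB
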